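/- arXiv:0812.4848 — 9 statements merged into one kernel-verified Lean document; each statement's English description precedes it below -/
import Mathlib

section
/- Let B be a finite set of Boolean functions each of which is 1-reproducing (i.e., f(1,…,1)=1). Then every temporal B-formula over the temporal operators {F,G,X,U,S} is satisfied at every state of the structure in which every propositional variable is true at every state; in particular, every such formula is satisfiable. -/
inductive TFormula (V : Type) : Type
  | var : V → TFormula V
  | app : (n : ℕ) → ((Fin n → Bool) → Bool) → (Fin n → TFormula V) → TFormula V
  | X : TFormula V → TFormula V
  | F : TFormula V → TFormula V
  | G : TFormula V → TFormula V
  | U : TFormula V → TFormula V → TFormula V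
  | S : TFormula V → TFormula V → TFormula V

def Sat {V : Type} (ξ : ℕ → V → Bool) : ℕ → TFormula V → Prop
  | i, TFormula.var x => ξ i x = true
  | i, TFormula.app n f args =>
      ∃ b : Fin n → Bool, (∀ k, (b k = true ↔ Sat ξ i (args k))) ∧ f b = true
  | i, TFormula.X φ => Sat ξ (i + 1) φ
  | i, TFormula.F φ => ∃ k, i ≤ k ∧ Sat ξ k φ
  | i, TFormula.G φ => ∀ k, i ≤ k → Sat ξ k φ
  | i, TFormula.U φ ψ => ∃ k, i ≤ k ∧ Sat ξ k ψ ∧ ∀ j, i ≤ j → j < k → Sat ξ j φ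
  | i, TFormula.S φ ψ => ∃ k, k ≤ i ∧ Sat ξ k ψ ∧ ∀ j, k < j → j ≤ i → Sat ξ j φ

/-- A Boolean function of some arity `n`. -/
abbrev BFun : Type := Σ n : ℕ, (Fin n → Bool) → Bool

/-- All Boolean connectives occurring in the formula come from `B`. -/
def UsesFuns {V : Type} (B : Set BFun) : TFormula V → Prop
  | TFormula.var _ => True
  | TFormula.app n f args => (⟨n, f⟩ : BFun) ∈ B ∧ ∀ k, UsesFuns B (args k)
  | TFormula.X φ => UsesFuns B φ
  | TFormula.F φ => UsesFuns B φ
  | TFormula.G φ => UsesFuns B φ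
  | TFormula.U φ ψ => UsesFuns B φ ∧ UsesFuns B ψ
  | TFormula.S φ ψ => UsesFuns B φ ∧ UsesFuns B ψ

/-- Conjunction as the binary Boolean AND connective. -/
def TFormula.and {V : Type} (φ ψ : TFormula V) : TFormula V :=
  TFormula.app 2 (fun b => b 0 && b 1) ![φ, ψ]

/-- Disjunction as the binary Boolean OR connective. -/
def TFormula.or {V : Type} (φ ψ : TFormula V) : TFormula V :=
  TFormula.app 2 (fun b => b 0 || b 1) ![φ, ψ]

/-- Negation as the unary Boolean NOT connective. -/
def TFormula.neg {V : Type} (φ : TFormula V) : TFormula V :=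
  TFormula.app 1 (fun b => ! b 0) ![φ]

/-- The propositional constant 1 (true), a 0-ary connective. -/
def TFormula.tt {V : Type} : TFormula V := TFormula.app 0 (fun _ => true) ![]

/-- The propositional constant 0 (false), a 0-ary connective. -/
def TFormula.ff {V : Type} : TFormula V := TFormula.app 0 (fun _ => false) ![]

/-- Propositional formula: no temporal operators. -/
def IsProp {V : Type} : TFormula V → Prop
  | TFormula.var _ => True
  | TFormula.app _ _ args => ∀ k, IsProp (args k)
  | TFormula.X _ => False
  | TFormula.F _ => False
  | TFormula.G _ => False
  | TFormula.U _ _ => False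
  | TFormula.S _ _ => False

/-- The temporal operator S does not occur. -/
def NoS {V : Type} : TFormula V → Prop
  | TFormula.var _ => True
  | TFormula.app _ _ args => ∀ k, NoS (args k)
  | TFormula.X φ => NoS φ
  | TFormula.F φ => NoS φ
  | TFormula.G φ => NoS φ
  | TFormula.U φ ψ => NoS φ ∧ NoS ψ
  | TFormula.S _ _ => False

/-- The only temporal operator occurring is S. -/
def OnlyS {V : Type} : TFormula V → Prop
  | TFormula.var _ => True
  | TFormula.app _ _ args => ∀ k, OnlyS (args k)
  | TFormula.X _ => False
  | TFormula.F _ => False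
  | TFormula.G _ => False
  | TFormula.U _ _ => False
  | TFormula.S φ ψ => OnlyS φ ∧ OnlyS ψ

/-- The only temporal operator occurring is X. -/
def OnlyX {V : Type} : TFormula V → Prop
  | TFormula.var _ => True
  | TFormula.app _ _ args => ∀ k, OnlyX (args k)
  | TFormula.X φ => OnlyX φ
  | TFormula.F _ => False
  | TFormula.G _ => False
  | TFormula.U _ _ => False
  | TFormula.S _ _ => False

/-- Maximal nesting degree of the operator X. -/
def xdepth {V : Type} : TFormula V → ℕ
  | TFormula.var _ => 0
  | TFormula.app _ _ args => Finset.univ.sup fun k => xdepth (args k)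
  | TFormula.X φ => xdepth φ + 1
  | TFormula.F φ => xdepth φ
  | TFormula.G φ => xdepth φ
  | TFormula.U φ ψ => max (xdepth φ) (xdepth ψ)
  | TFormula.S φ ψ => max (xdepth φ) (xdepth ψ)

/-- `rightTower φ i m` is the right-nested Since-tower
`φ i S (φ (i+1) S (… S φ (i+m) …))`. -/
def rightTower {V : Type} (φ : ℕ → TFormula V) : ℕ → ℕ → TFormula V
  | i, 0 => φ i
  | i, m + 1 => TFormula.S (φ i) (rightTower φ (i + 1) m)

/-- `leftTower φ i m` is the left-nested Since-tower
`(…((φ i S φ (i+1)) S φ (i+2)) S …) S φ (i+m)`. -/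
def leftTower {V : Type} (φ : ℕ → TFormula V) (i : ℕ) : ℕ → TFormula V
  | 0 => φ i
  | m + 1 => TFormula.S (leftTower φ i m) (φ (i + m + 1))

theorem sat_allTrue_of_usesFuns {V : Type} {B : Set BFun}
    (h1 : ∀ f ∈ B, f.2 (fun _ => true) = true) {φ : TFormula V} (hφ : UsesFuns B φ)
    (i : ℕ) : Sat (fun _ _ => true) i φ := by
  induction φ generalizing i with
  | var _ => rfl
  | app _ _ _ ih =>
    exact ⟨fun _ => true, fun k => iff_of_true rfl (ih k (hφ.2 k) i), h1 _ hφ.1⟩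
  | X φ ih => exact ih hφ (i + 1)
  | F φ ih => exact ⟨i, le_rfl, ih hφ i⟩
  | G φ ih => exact fun k _ => ih hφ k
  | U φ ψ ihφ ihψ => exact ⟨i, le_rfl, ihψ hφ.2 i, fun j _ _ => ihφ hφ.1 j⟩
  | S φ ψ ihφ ihψ => exact ⟨i, le_rfl, ihψ hφ.2 i, fun j _ _ => ihφ hφ.1 j⟩

theorem stmt0_general {V : Type} (B : Set BFun)
    (h1 : ∀ f ∈ B, f.2 (fun _ => true) = true)
    (φ : TFormula V) (hφ : UsesFuns B φ) :
    (∀ i : ℕ, Sat (fun _ _ => true) i φ) ∧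
    (∃ (ξ : ℕ → V → Bool) (i : ℕ), Sat ξ i φ) :=
  ⟨sat_allTrue_of_usesFuns h1 hφ, fun _ _ => true, 0, sat_allTrue_of_usesFuns h1 hφ 0⟩

/-- If `B` is a finite set of 1-reproducing Boolean functions, then every
temporal `B`-formula over {F,G,X,U,S} is satisfied at every state of the all-true
structure; in particular, every such formula is satisfiable. -/
theorem stmt0 {V : Type} (B : Set BFun) (hfin : B.Finite)
    (h1 : ∀ f ∈ B, f.2 (fun _ => true) = true)
    (φ : TFormula V) (hφ : UsesFuns B φ) :
    (∀ i : ℕ, Sat (fun _ _ => true) i φ) ∧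
    (∃ (ξ : ℕ → V → Bool) (i : ℕ), Sat ξ i φ) :=
  stmt0_general B h1 φ hφ
end

section
/- Let B be a set of self-dual Boolean functions and let φ be a temporal B-formula over the temporal operators {F,G,X,U,S}. Let S¹ be the structure in which every propositional variable is true at every state and S⁰ the structure in which every propositional variable is false at every state. Then S¹ satisfies φ at its first state s₀ if and only if S⁰ does not satisfy φ at its first state s₀. -/
/-! In a structure where every variable has the same value at every state, all states satisfy
the same formulas, so each temporal operator collapses to one of its arguments. What remains
is a propositional formula built from self-dual connectives, and such a formula takes opposite
values under the two constant assignments. -/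

section ConstantPredicate

variable {P Q : ℕ → Prop}

theorem exists_ge_iff_of_const (hP : ∀ i j, P i ↔ P j) (i : ℕ) :
    (∃ k, i ≤ k ∧ P k) ↔ P i :=
  ⟨fun ⟨k, _, hk⟩ => (hP k i).1 hk, fun h => ⟨i, le_rfl, h⟩⟩

theorem forall_ge_iff_of_const (hP : ∀ i j, P i ↔ P j) (i : ℕ) :
    (∀ k, i ≤ k → P k) ↔ P i :=
  ⟨fun h => h i le_rfl, fun h k _ => (hP i k).1 h⟩

theorem until_iff_of_const (hQ : ∀ i j, Q i ↔ Q j) (i : ℕ) :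
    (∃ k, i ≤ k ∧ Q k ∧ ∀ j, i ≤ j → j < k → P j) ↔ Q i :=
  ⟨fun ⟨k, _, hk, _⟩ => (hQ k i).1 hk, fun h => ⟨i, le_rfl, h, fun _ _ _ => by omega⟩⟩

theorem since_iff_of_const (hQ : ∀ i j, Q i ↔ Q j) (i : ℕ) :
    (∃ k, k ≤ i ∧ Q k ∧ ∀ j, k < j → j ≤ i → P j) ↔ Q i :=
  ⟨fun ⟨k, _, hk, _⟩ => (hQ k i).1 hk, fun h => ⟨i, le_rfl, h, fun _ _ _ => by omega⟩⟩

end ConstantPredicate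

open Classical in
theorem sat_app_iff {V : Type} (ξ : ℕ → V → Bool) (i n : ℕ) (f : (Fin n → Bool) → Bool)
    (args : Fin n → TFormula V) :
    Sat ξ i (.app n f args) ↔ f (fun k => decide (Sat ξ i (args k))) = true := by
  refine ⟨fun ⟨b, hb, hf⟩ => ?_, fun h => ⟨_, fun _ => decide_eq_true_iff, h⟩⟩
  rwa [show b = fun k => decide (Sat ξ i (args k)) from
    funext fun k => Bool.eq_iff_iff.2 ((hb k).trans decide_eq_true_iff.symm)] at hf

section ConstantStructure

variable {V : Type} (c : Bool)

theorem sat_const_iff (φ : TFormula V) (i j : ℕ) :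
    Sat (fun _ _ => c) i φ ↔ Sat (fun _ _ => c) j φ := by
  induction φ generalizing i j with
  | var _ => exact Iff.rfl
  | app n f args ih =>
    exact exists_congr fun b =>
      and_congr_left' (forall_congr' fun k => iff_congr Iff.rfl (ih k i j))
  | X φ ih => exact ih (i + 1) (j + 1)
  | F φ ih =>
    exact (exists_ge_iff_of_const ih i).trans ((ih i j).trans (exists_ge_iff_of_const ih j).symm)
  | G φ ih =>
    exact (forall_ge_iff_of_const ih i).trans ((ih i j).trans (forall_ge_iff_of_const ih j).symm)
  | U φ ψ _ ih =>
    exact (until_iff_of_const ih i).trans ((ih i j).trans (until_iff_of_const ih j).symm)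
  | S φ ψ _ ih =>
    exact (since_iff_of_const ih i).trans ((ih i j).trans (since_iff_of_const ih j).symm)

theorem sat_const_F_iff (φ : TFormula V) (i : ℕ) :
    Sat (fun _ _ => c) i (.F φ) ↔ Sat (fun _ _ => c) i φ :=
  exists_ge_iff_of_const (sat_const_iff c φ) i

theorem sat_const_G_iff (φ : TFormula V) (i : ℕ) :
    Sat (fun _ _ => c) i (.G φ) ↔ Sat (fun _ _ => c) i φ :=
  forall_ge_iff_of_const (sat_const_iff c φ) i

theorem sat_const_U_iff (φ ψ : TFormula V) (i : ℕ) :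
    Sat (fun _ _ => c) i (.U φ ψ) ↔ Sat (fun _ _ => c) i ψ :=
  until_iff_of_const (sat_const_iff c ψ) i

theorem sat_const_S_iff (φ ψ : TFormula V) (i : ℕ) :
    Sat (fun _ _ => c) i (.S φ ψ) ↔ Sat (fun _ _ => c) i ψ :=
  since_iff_of_const (sat_const_iff c ψ) i

end ConstantStructure

open Classical in
theorem sat_true_iff_not_sat_false {V : Type} (B : Set BFun)
    (hsd : ∀ f ∈ B, ∀ b : Fin f.1 → Bool, f.2 b = ! f.2 (fun k => ! b k))
    (φ : TFormula V) (hφ : UsesFuns B φ) (i : ℕ) :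
    Sat (fun _ _ => true) i φ ↔ ¬ Sat (fun _ _ => false) i φ := by
  induction φ generalizing i with
  | var _ => simp [Sat]
  | app n f args ih =>
    obtain ⟨hf, hargs⟩ := hφ
    have hdual : ∀ b, f b = !f (fun k => !b k) := hsd ⟨n, f⟩ hf
    have hneg : (fun k => decide (Sat (fun _ _ => false) i (args k))) =
        fun k => !decide (Sat (fun _ _ => true) i (args k)) :=
      funext fun k => by simp [ih k (hargs k) i]
    rw [sat_app_iff, sat_app_iff, hneg, hdual]
    simp
  | X φ ih => exact ih hφ (i + 1)
  | F φ ih => simpa only [sat_const_F_iff] using ih hφ i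
  | G φ ih => simpa only [sat_const_G_iff] using ih hφ i
  | U φ ψ _ ih => simpa only [sat_const_U_iff] using ih hφ.2 i
  | S φ ψ _ ih => simpa only [sat_const_S_iff] using ih hφ.2 i

/-- If `B` is a set of self-dual Boolean functions and `φ` is a temporal
`B`-formula, then the all-true structure satisfies `φ` at its first state iff the
all-false structure does not satisfy `φ` at its first state. -/
theorem stmt1 {V : Type} (B : Set BFun)
    (hsd : ∀ f ∈ B, ∀ b : Fin f.1 → Bool, f.2 b = ! f.2 (fun k => ! b k))
    (φ : TFormula V) (hφ : UsesFuns B φ) :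
    Sat (fun _ _ => true) 0 φ ↔ ¬ Sat (fun _ _ => false) 0 φ :=
  sat_true_iff_not_sat_false B hsd φ hφ 0
end

section
/- Let B be a finite set of self-dual Boolean functions. Then every temporal B-formula over the temporal operators {F,G,X,U,S} is satisfiable. -/
def BFun.IsSelfDual (f : BFun) : Prop :=
  ∀ b : Fin f.1 → Bool, f.2 b = ! f.2 (fun k => ! b k)

namespace TFormula

variable {V : Type}

/-- The truth value of a formula at every state of the structure in which every variable is
constantly `b`. -/
def evalConst (b : Bool) : TFormula V → Bool
  | var _ => b
  | app _ f args => f fun k => evalConst b (args k)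
  | X φ => evalConst b φ
  | F φ => evalConst b φ
  | G φ => evalConst b φ
  | U _ ψ => evalConst b ψ
  | S _ ψ => evalConst b ψ

theorem evalConst_not {B : Set BFun} (hsd : ∀ f ∈ B, f.IsSelfDual) {φ : TFormula V}
    (hφ : UsesFuns B φ) (b : Bool) : evalConst (!b) φ = !evalConst b φ := by
  induction φ with
  | var _ => rfl
  | app n f args ih =>
    obtain ⟨hf, hargs⟩ := hφ
    simp only [evalConst, ih _ (hargs _)]
    exact (hsd _ hf _).trans (by simp only [Bool.not_not])
  | X _ ih | F _ ih | G _ ih => exact ih hφ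
  | U _ _ _ ih | S _ _ _ ih => exact ih hφ.2

end TFormula

open TFormula

theorem sat_app_iff_of_iff {V : Type} {ξ : ℕ → V → Bool} {i n : ℕ} {f : (Fin n → Bool) → Bool}
    {args : Fin n → TFormula V} {c : Fin n → Bool} (hc : ∀ k, Sat ξ i (args k) ↔ c k = true) :
    Sat ξ i (app n f args) ↔ f c = true := by
  refine ⟨fun ⟨b, hb, hf⟩ => ?_, fun hf => ⟨c, fun k => (hc k).symm, hf⟩⟩
  obtain rfl : b = c := funext fun k => Bool.eq_iff_iff.2 ((hb k).trans (hc k))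
  exact hf

theorem sat_const_iff_evalConst {V : Type} (b : Bool) (φ : TFormula V) (i : ℕ) :
    Sat (fun _ _ => b) i φ ↔ evalConst b φ = true := by
  induction φ generalizing i with
  | var _ => rfl
  | app _ _ _ ih => exact sat_app_iff_of_iff fun k => ih k i
  | X _ ih => exact ih (i + 1)
  | F _ ih =>
    simp only [Sat, ih, evalConst]
    exact ⟨fun ⟨_, _, h⟩ => h, fun h => ⟨i, le_rfl, h⟩⟩
  | G _ ih =>
    simp only [Sat, ih, evalConst]
    exact ⟨fun h => h i le_rfl, fun h _ _ => h⟩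
  | U _ _ _ ih =>
    simp only [Sat, ih, evalConst]
    exact ⟨fun ⟨_, _, h, _⟩ => h, fun h => ⟨i, le_rfl, h, fun _ _ _ => by omega⟩⟩
  | S _ _ _ ih =>
    simp only [Sat, ih, evalConst]
    exact ⟨fun ⟨_, _, h, _⟩ => h, fun h => ⟨i, le_rfl, h, fun _ _ _ => by omega⟩⟩

theorem stmt2_general {V : Type} (B : Set BFun)
    (hsd : ∀ f ∈ B, ∀ b : Fin f.1 → Bool, f.2 b = ! f.2 (fun k => ! b k))
    (φ : TFormula V) (hφ : UsesFuns B φ) :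
    ∃ (ξ : ℕ → V → Bool) (i : ℕ), Sat ξ i φ := by
  cases h : evalConst true φ
  · refine ⟨fun _ _ => false, 0, (sat_const_iff_evalConst _ _ _).2 ?_⟩
    simpa [h] using evalConst_not hsd hφ true
  · exact ⟨fun _ _ => true, 0, (sat_const_iff_evalConst _ _ _).2 h⟩

/-- If `B` is a finite set of self-dual Boolean functions, then every
temporal `B`-formula over {F,G,X,U,S} is satisfiable. -/
theorem stmt2 {V : Type} (B : Set BFun) (hfin : B.Finite)
    (hsd : ∀ f ∈ B, ∀ b : Fin f.1 → Bool, f.2 b = ! f.2 (fun k => ! b k))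
    (φ : TFormula V) (hφ : UsesFuns B φ) :
    ∃ (ξ : ℕ → V → Bool) (i : ℕ), Sat ξ i φ :=
  stmt2_general B hsd φ hφ
end

section
/- Let n ≥ 2 and let φ₁, …, φₙ be satisfiable propositional formulas such that φ_i ∧ φ_j is unsatisfiable for all i ≠ j. Then the temporal formula φ = φ₁ ∧ (φ₁ S (φ₂ S (… S (φ_{n−1} S φₙ)…))) ∧ ((…((φ₁ S φ₂) S φ₃) S …) S φₙ) is satisfiable. -/
/-!
A propositional formula only sees the current state, so each satisfiable `φ i` has a model
valuation. Placing models of `φ n, …, φ 1` on the consecutive states `0, …, n - 1` and evaluating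
at `n - 1` satisfies both towers: every `S` of the right tower finds its right argument one step
back, and every `S` of the left tower finds `φ (i + m + 1)` exactly `m + 1` steps back, with the
shorter left tower holding on all states in between.
-/

namespace TFormula

variable {V : Type}

theorem sat_iff_of_isProp {ψ : TFormula V} (h : IsProp ψ) {ξ ξ' : ℕ → V → Bool} {t t' : ℕ}
    (hv : ξ t = ξ' t') : Sat ξ t ψ ↔ Sat ξ' t' ψ := by
  induction ψ with
  | var x => simp only [Sat, hv]
  | app n f args ih =>
    simp only [Sat]
    exact exists_congr fun b => and_congr
      (forall_congr' fun k => iff_congr Iff.rfl (ih k (h k))) Iff.rfl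
  | X | F | G | U | S => exact h.elim

theorem exists_valuation_of_isProp {ψ : TFormula V} (h : IsProp ψ)
    (hsat : ∃ (ξ : ℕ → V → Bool) (t : ℕ), Sat ξ t ψ) :
    ∃ v : V → Bool, ∀ ξ t, ξ t = v → Sat ξ t ψ := by
  obtain ⟨ξ₀, t₀, h₀⟩ := hsat
  exact ⟨ξ₀ t₀, fun ξ t hv => (sat_iff_of_isProp h hv).2 h₀⟩

@[simp]
theorem sat_and (ξ : ℕ → V → Bool) (t : ℕ) (φ ψ : TFormula V) :
    Sat ξ t (φ.and ψ) ↔ Sat ξ t φ ∧ Sat ξ t ψ := by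
  simp only [TFormula.and, Sat]
  constructor
  · rintro ⟨b, hb, hf⟩
    rw [Bool.and_eq_true] at hf
    exact ⟨(hb 0).1 hf.1, (hb 1).1 hf.2⟩
  · rintro ⟨h₁, h₂⟩
    refine ⟨![true, true], fun k => ?_, rfl⟩
    fin_cases k <;> simpa

end TFormula

open TFormula

section Towers

variable {V : Type} {ξ : ℕ → V → Bool} {φ : ℕ → TFormula V}

theorem sat_rightTower_of_staircase {i m s : ℕ}
    (h : ∀ k ≤ m, Sat ξ (s - k) (φ (i + k))) : Sat ξ s (rightTower φ i m) := by
  induction m generalizing i s with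
  | zero => simpa [rightTower] using h 0 le_rfl
  | succ m ih =>
    have hprev : Sat ξ (s - 1) (rightTower φ (i + 1) m) := ih fun k hk => by
      simpa [Nat.sub_sub, add_assoc, add_comm 1 k] using h (k + 1) (by omega)
    refine ⟨s - 1, Nat.sub_le s 1, hprev, fun j hj hjs => ?_⟩
    obtain rfl : j = s := by omega
    simpa using h 0 (Nat.zero_le _)

theorem sat_leftTower_of_staircase {i m s : ℕ}
    (h : ∀ k ≤ m, Sat ξ (s - k) (φ (i + k))) {t : ℕ} (ht : s - m ≤ t) (hts : t ≤ s) :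
    Sat ξ t (leftTower φ i m) := by
  induction m generalizing t with
  | zero =>
    obtain rfl : t = s := by omega
    simpa [leftTower] using h 0 le_rfl
  | succ m ih =>
    refine ⟨s - (m + 1), ht, h (m + 1) le_rfl, fun j hj hjt => ?_⟩
    exact ih (fun k hk => h k (by omega)) (by omega) (by omega)

end Towers

theorem stmt4_general {V : Type} (n : ℕ) (hn : 2 ≤ n) (φ : ℕ → TFormula V)
    (hprop : ∀ i, 1 ≤ i → i ≤ n → IsProp (φ i))
    (hsat : ∀ i, 1 ≤ i → i ≤ n → ∃ (ξ : ℕ → V → Bool) (m : ℕ), Sat ξ m (φ i)) :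
    ∃ (ξ : ℕ → V → Bool) (m : ℕ),
      Sat ξ m ((φ 1).and ((rightTower φ 1 (n - 1)).and (leftTower φ 1 (n - 1)))) := by
  have hval : ∀ i, ∃ v : V → Bool, 1 ≤ i → i ≤ n → ∀ ξ t, ξ t = v → Sat ξ t (φ i) := by
    intro i
    by_cases hi : 1 ≤ i ∧ i ≤ n
    · obtain ⟨v, hv⟩ := exists_valuation_of_isProp (hprop i hi.1 hi.2) (hsat i hi.1 hi.2)
      exact ⟨v, fun _ _ => hv⟩
    · exact ⟨fun _ => true, fun h₁ h₂ => absurd ⟨h₁, h₂⟩ hi⟩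
  choose v hv using hval
  let ξ : ℕ → V → Bool := fun t => v (n - t)
  have staircase : ∀ k ≤ n - 1, Sat ξ (n - 1 - k) (φ (1 + k)) := fun k hk =>
    hv (1 + k) (by omega) (by omega) ξ _ (congrArg v (by omega))
  refine ⟨ξ, n - 1, ?_⟩
  simp only [sat_and]
  exact ⟨by simpa using staircase 0 (Nat.zero_le _), sat_rightTower_of_staircase staircase,
    sat_leftTower_of_staircase staircase (Nat.sub_le _ _) le_rfl⟩

/-- For `n ≥ 2` and satisfiable, pairwise contradictory propositional
formulas `φ 1, …, φ n`, the formula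
`φ 1 ∧ (φ 1 S (φ 2 S (… S φ n …))) ∧ ((…(φ 1 S φ 2) S …) S φ n)` is satisfiable. -/
theorem stmt4 {V : Type} (n : ℕ) (hn : 2 ≤ n) (φ : ℕ → TFormula V)
    (hprop : ∀ i, 1 ≤ i → i ≤ n → IsProp (φ i))
    (hsat : ∀ i, 1 ≤ i → i ≤ n → ∃ (ξ : ℕ → V → Bool) (m : ℕ), Sat ξ m (φ i))
    (hcontra : ∀ i j, 1 ≤ i → i ≤ n → 1 ≤ j → j ≤ n → i ≠ j →
      ¬ ∃ (ξ : ℕ → V → Bool) (m : ℕ), Sat ξ m ((φ i).and (φ j))) :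
    ∃ (ξ : ℕ → V → Bool) (m : ℕ),
      Sat ξ m ((φ 1).and ((rightTower φ 1 (n - 1)).and (leftTower φ 1 (n - 1)))) :=
  stmt4_general n hn φ hprop hsat
end

section
/- Let n ≥ 2 and let φ₁, …, φₙ be satisfiable propositional formulas such that φ_i ∧ φ_j is unsatisfiable for all i ≠ j, and let φ = φ₁ ∧ (φ₁ S (φ₂ S (… S (φ_{n−1} S φₙ)…))) ∧ ((…((φ₁ S φ₂) S φ₃) S …) S φₙ). Then every structure S that satisfies φ at a state s_m admits natural numbers 0 = a₀ < a₁ < … < aₙ ≤ m+1 such that for every i ∈ {1,…,n} and every j with m − a_i < j ≤ m − a_{i−1}, the structure S satisfies φ_i at state s_j. -/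
/-! Unfolding the right tower at `m` gives a chain `m = k 0 ≥ k 1 ≥ … ≥ k (n-1)` such that,
going back from `m`, the states are covered by consecutive blocks `(k s, k (s-1)]` on which
`φ s` holds, followed by a state `k (n-1)` satisfying `φ n`; since the `φ i` are pairwise
exclusive, each state carries at most one of them. The theorem asks exactly that all these
blocks be nonempty. The left tower provides this: as `φ 1` holds at `m`, it still holds there
after removing any number of its outer layers, and `(…(φ 1 S φ 2) S …) S φ (s+1)` at `m`
yields a state satisfying `φ (s+1)`, all later states up to `m` satisfying some `φ i` with
`i ≤ s`. That state therefore lies above `k (n-1)`, hence inside the `(s+1)`-st block. -/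

variable {V : Type} (ξ : ℕ → V → Bool) (φ : ℕ → TFormula V)

theorem sat_and_iff {ψ χ : TFormula V} {t : ℕ} :
    Sat ξ t (ψ.and χ) ↔ Sat ξ t ψ ∧ Sat ξ t χ := by
  constructor
  · rintro ⟨b, hb, hf⟩
    simp only [Fin.isValue, Bool.and_eq_true] at hf
    exact ⟨(hb 0).1 hf.1, (hb 1).1 hf.2⟩
  · rintro ⟨hψ, hχ⟩
    refine ⟨![true, true], fun k => ?_, rfl⟩
    fin_cases k <;> simp [hψ, hχ]

theorem exists_mem_Ioc_succ_of_lt_of_le (k : ℕ → ℕ) {r j : ℕ} (hr : k r < j) (h0 : j ≤ k 0) :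
    ∃ s < r, j ∈ Set.Ioc (k (s + 1)) (k s) := by
  have hex : ∃ s, k s < j := ⟨r, hr⟩
  obtain ⟨s, hs⟩ : ∃ s, Nat.find hex = s + 1 :=
    Nat.exists_eq_succ_of_ne_zero fun h => (Nat.find_eq_zero hex).1 h |>.not_ge h0
  refine ⟨s, ?_, hs ▸ Nat.find_spec hex, not_lt.1 (Nat.find_min hex (by omega))⟩
  have := Nat.find_min' hex hr
  omega

structure RightTowerChain (i r t : ℕ) (k : ℕ → ℕ) : Prop where
  zero : k 0 = t
  succ_le : ∀ s < r, k (s + 1) ≤ k s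
  last : Sat ξ (k r) (φ (i + r))
  block : ∀ s < r, ∀ j ∈ Set.Ioc (k (s + 1)) (k s), Sat ξ j (φ (i + s))

theorem exists_rightTowerChain {i r t : ℕ} (h : Sat ξ t (rightTower φ i r)) :
    ∃ k, RightTowerChain ξ φ i r t k := by
  induction r generalizing i t with
  | zero => exact ⟨fun _ => t, ⟨rfl, by omega, h, by omega⟩⟩
  | succ r ih =>
    obtain ⟨t', ht', hR, hφ⟩ := h
    obtain ⟨k, hk⟩ := ih hR
    refine ⟨fun | 0 => t | s + 1 => k s, ⟨rfl, ?_, ?_, ?_⟩⟩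
    · rintro (_ | s) hs
      · exact hk.zero.trans_le ht'
      · exact hk.succ_le s (by omega)
    · simpa only [Nat.add_right_comm, Nat.add_assoc] using hk.last
    · rintro (_ | s) hs j ⟨hj, hj'⟩
      · exact hφ j (hk.zero ▸ hj) hj'
      · simpa only [Nat.add_right_comm, Nat.add_assoc] using hk.block s (by omega) j ⟨hj, hj'⟩

theorem exists_sat_of_sat_leftTower {i r t : ℕ} (h : Sat ξ t (leftTower φ i r)) :
    ∃ u ≤ t, Sat ξ u (φ (i + r)) ∧ ∀ p ∈ Set.Ioc u t, ∃ s < r, Sat ξ p (φ (i + s)) := by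
  induction r generalizing t with
  | zero => exact ⟨t, le_rfl, h, fun _ hp => absurd hp.2 hp.1.not_ge⟩
  | succ r ih =>
    obtain ⟨u, hut, hu, hL⟩ := h
    refine ⟨u, hut, hu, fun p ⟨hup, hpt⟩ => ?_⟩
    obtain ⟨w, hwp, hw, hcol⟩ := ih (hL p hup hpt)
    rcases hwp.eq_or_lt with rfl | hwp
    · exact ⟨r, by omega, hw⟩
    · obtain ⟨s, hs, hps⟩ := hcol p ⟨hwp, le_rfl⟩
      exact ⟨s, by omega, hps⟩

theorem sat_leftTower_of_le {i r t : ℕ} (hnot : ∀ s, 0 < s → s ≤ r → ¬ Sat ξ t (φ (i + s)))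
    (h : Sat ξ t (leftTower φ i r)) {s : ℕ} (hs : s ≤ r) : Sat ξ t (leftTower φ i s) := by
  induction r with
  | zero => rwa [Nat.le_zero.1 hs]
  | succ r ih =>
    rcases hs.eq_or_lt with rfl | hs
    · exact h
    obtain ⟨u, hut, hu, hL⟩ := h
    rcases hut.eq_or_lt with rfl | hut
    · exact absurd hu (hnot (r + 1) r.succ_pos le_rfl)
    · exact ih (fun s hs hsr => hnot s hs (by omega)) (hL t hut le_rfl) (by omega)

namespace RightTowerChain

variable {ξ φ} {i r t : ℕ} {k : ℕ → ℕ} (hk : RightTowerChain ξ φ i r t k)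
  (hdisj : ∀ j s s', s ≤ r → s' ≤ r → Sat ξ j (φ (i + s)) → Sat ξ j (φ (i + s')) → s = s')
include hk

theorem last_le : k r ≤ t :=
  hk.zero ▸ antitoneOn_of_add_one_le Set.ordConnected_Iic
    (fun s _ _ hs => hk.succ_le s hs) (Nat.zero_le r) (le_refl r) (Nat.zero_le r)

include hdisj in
theorem mem_block_of_sat {j s : ℕ} (hs : s < r) (hkj : k r ≤ j) (hjt : j ≤ t)
    (hj : Sat ξ j (φ (i + s))) : j ∈ Set.Ioc (k (s + 1)) (k s) := by
  rcases hkj.eq_or_lt with rfl | hkj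
  · exact absurd (hdisj _ s r hs.le le_rfl hj hk.last) hs.ne
  obtain ⟨s', hs', hblock⟩ := exists_mem_Ioc_succ_of_lt_of_le k hkj (hk.zero ▸ hjt)
  obtain rfl := hdisj j s s' hs.le hs'.le hj (hk.block s' hs' j hblock)
  exact hblock

include hdisj in
theorem strictAntiOn (hφ : Sat ξ t (φ i)) (hL : Sat ξ t (leftTower φ i r)) :
    StrictAntiOn k (Set.Iic r) := by
  refine strictAntiOn_of_add_one_lt Set.ordConnected_Iic fun s _ _ hs => ?_
  have hsr : s < r := hs
  have hnot : ∀ s', 0 < s' → s' ≤ r → ¬ Sat ξ t (φ (i + s')) := fun s' hs' hs'r h =>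
    hs'.ne (hdisj t 0 s' (Nat.zero_le r) hs'r hφ h)
  obtain ⟨u, hut, hu, hcol⟩ :=
    exists_sat_of_sat_leftTower ξ φ (sat_leftTower_of_le ξ φ hnot hL hsr.le)
  have hku : k r ≤ u := by
    by_contra! hku
    obtain ⟨s', hs', hks'⟩ := hcol (k r) ⟨hku, hk.last_le⟩
    exact absurd (hdisj _ s' r (by omega) le_rfl hks' hk.last) (by omega)
  have hblock := hk.mem_block_of_sat hdisj hsr hku hut hu
  exact hblock.1.trans_le hblock.2

theorem exists_offsets (hanti : StrictAntiOn k (Set.Iic r)) :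
    ∃ a : ℕ → ℕ, a 0 = 0 ∧ (∀ s ≤ r, a s < a (s + 1)) ∧ a (r + 1) ≤ t + 1 ∧
      ∀ s ≤ r, ∀ j : ℕ, (t : ℤ) - a (s + 1) < j → j ≤ (t : ℤ) - a s → Sat ξ j (φ (i + s)) := by
  have hkt : ∀ s ≤ r, k s ≤ t := fun s hs =>
    hk.zero ▸ hanti.antitoneOn (Nat.zero_le r) hs (Nat.zero_le s)
  -- the last block, of `φ (i + r)`, is the single state `k r`
  refine ⟨fun s => if s ≤ r then t - k s else t + 1 - k r, by simp [hk.zero], ?_, by simp, ?_⟩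
  · intro s hs
    have hks := hkt s hs
    by_cases hsr : s + 1 ≤ r
    · have hlt := hanti (Set.mem_Iic.2 hs) (Set.mem_Iic.2 hsr) s.lt_succ_self
      simp only [hsr, hs, ↓reduceIte]
      omega
    · obtain rfl : s = r := by omega
      simp only [hsr, le_rfl, ↓reduceIte]
      omega
  · intro s hs j hj hj'
    have hks := hkt s hs
    by_cases hsr : s + 1 ≤ r
    · have hks' := hkt (s + 1) hsr
      simp only [hsr, hs, ↓reduceIte] at hj hj'
      exact hk.block s hsr j ⟨by omega, by omega⟩
    · obtain rfl : s = r := by omega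
      simp only [hsr, le_rfl, ↓reduceIte] at hj hj'
      simpa only [show j = k s by omega] using hk.last

end RightTowerChain

theorem stmt5_general {V : Type} (n : ℕ) (hn : 2 ≤ n) (φ : ℕ → TFormula V)
    (hcontra : ∀ i j, 1 ≤ i → i ≤ n → 1 ≤ j → j ≤ n → i ≠ j →
      ¬ ∃ (ξ : ℕ → V → Bool) (m : ℕ), Sat ξ m ((φ i).and (φ j)))
    (ξ : ℕ → V → Bool) (m : ℕ)
    (hSat : Sat ξ m ((φ 1).and ((rightTower φ 1 (n - 1)).and (leftTower φ 1 (n - 1))))) :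
    ∃ a : ℕ → ℕ, a 0 = 0 ∧ (∀ i, i < n → a i < a (i + 1)) ∧ a n ≤ m + 1 ∧
      ∀ i, 1 ≤ i → i ≤ n → ∀ j : ℕ,
        (m : ℤ) - (a i : ℤ) < (j : ℤ) → (j : ℤ) ≤ (m : ℤ) - (a (i - 1) : ℤ) →
        Sat ξ j (φ i) := by
  obtain ⟨r, rfl⟩ : ∃ r, n = r + 1 := ⟨n - 1, by omega⟩
  simp only [sat_and_iff, Nat.add_sub_cancel] at hSat
  obtain ⟨h1, hR, hL⟩ := hSat
  have hdisj : ∀ j s s', s ≤ r → s' ≤ r → Sat ξ j (φ (1 + s)) → Sat ξ j (φ (1 + s')) →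
      s = s' := fun j s s' hs hs' h h' => by
    by_contra hne
    exact hcontra (1 + s) (1 + s') (by omega) (by omega) (by omega) (by omega) (by omega)
      ⟨ξ, j, (sat_and_iff ξ).2 ⟨h, h'⟩⟩
  obtain ⟨k, hk⟩ := exists_rightTowerChain ξ φ hR
  obtain ⟨a, ha0, hmono, hlast, hblock⟩ := hk.exists_offsets (hk.strictAntiOn hdisj h1 hL)
  refine ⟨a, ha0, fun i hi => hmono i (by omega), hlast, ?_⟩
  rintro (_ | i) hi1 hi2 j hj hj'
  · omega
  simpa only [Nat.add_comm 1 i] using hblock i (by omega) j hj hj'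

/-- For `n ≥ 2` and satisfiable, pairwise contradictory propositional
formulas `φ 1, …, φ n`, every structure satisfying
`φ 1 ∧ (φ 1 S (φ 2 S (… S φ n …))) ∧ ((…(φ 1 S φ 2) S …) S φ n)` at state `s m`
admits `0 = a 0 < a 1 < … < a n ≤ m + 1` with: `m - a i < j ≤ m - a (i-1)` implies
`φ i` holds at `s j`. -/
theorem stmt5 {V : Type} (n : ℕ) (hn : 2 ≤ n) (φ : ℕ → TFormula V)
    (hprop : ∀ i, 1 ≤ i → i ≤ n → IsProp (φ i))
    (hsat : ∀ i, 1 ≤ i → i ≤ n → ∃ (ξ : ℕ → V → Bool) (m : ℕ), Sat ξ m (φ i))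
    (hcontra : ∀ i j, 1 ≤ i → i ≤ n → 1 ≤ j → j ≤ n → i ≠ j →
      ¬ ∃ (ξ : ℕ → V → Bool) (m : ℕ), Sat ξ m ((φ i).and (φ j)))
    (ξ : ℕ → V → Bool) (m : ℕ)
    (hSat : Sat ξ m ((φ 1).and ((rightTower φ 1 (n - 1)).and (leftTower φ 1 (n - 1))))) :
    ∃ a : ℕ → ℕ, a 0 = 0 ∧ (∀ i, i < n → a i < a (i + 1)) ∧ a n ≤ m + 1 ∧
      ∀ i, 1 ≤ i → i ≤ n → ∀ j : ℕ,
        (m : ℤ) - (a i : ℤ) < (j : ℤ) → (j : ℤ) ≤ (m : ℤ) - (a (i - 1) : ℤ) →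
        Sat ξ j (φ i) :=
  stmt5_general n hn φ hcontra ξ m hSat
end

section
/- Let φ be a temporal formula whose only temporal operator is S, let S be a structure with assignment ξ, let j be a natural number, and let S' be the structure with assignment ξ' defined by ξ'(s_k) = ξ(s_k) for k ≤ j and ξ'(s_k) = ξ(s_{k−1}) for k > j (so the state s_j is repeated once). Then for every state index i: if i ≤ j then S, s_i ⊨ φ iff S', s_i ⊨ φ, and if i ≥ j then S, s_i ⊨ φ iff S', s_{i+1} ⊨ φ. In other words, truth of formulas using only the temporal operator S is invariant under finitely repeating a state in the model. -/
/-! A stuttering reparametrisation `f` starts at `0` and advances by `0` or `1` at each step, so it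
maps every interval `[k, i]` onto `[f k, f i]`. A Since-formula only asks about the intervals
ending at the current state, so it cannot tell `ξ ∘ f` at `i` from `ξ` at `f i`. Repeating `s j`
once is the stuttering reparametrisation that pauses at `j`. -/

structure IsStuttering (f : ℕ → ℕ) : Prop where
  map_zero : f 0 = 0
  monotone : Monotone f
  le_succ : ∀ k, f (k + 1) ≤ f k + 1

namespace IsStuttering

variable {f : ℕ → ℕ}

theorem exists_preimage_between (hf : IsStuttering f) {k i n : ℕ} (hki : k ≤ i)
    (hn : f k < n) (hni : n ≤ f i) : ∃ m, k < m ∧ m ≤ i ∧ f m = n := by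
  induction i with
  | zero =>
    obtain rfl : k = 0 := Nat.le_zero.mp hki
    omega
  | succ i ih =>
    rcases hni.eq_or_lt with rfl | hlt
    · exact ⟨i + 1, by grind, le_rfl, rfl⟩
    · have hk : k ≤ i := by
        by_contra! hk
        grind
      obtain ⟨m, hkm, hmi, rfl⟩ := ih hk (by grind [hf.le_succ i])
      exact ⟨m, hkm, hmi.trans i.le_succ, rfl⟩

theorem exists_last_preimage (hf : IsStuttering f) {i n : ℕ} (hn : n ≤ f i) :
    ∃ k, k ≤ i ∧ f k = n ∧ ∀ m, k < m → m ≤ i → n < f m := by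
  induction i with
  | zero => exact ⟨0, le_rfl, by grind [hf.map_zero], by grind⟩
  | succ i ih =>
    rcases hn.eq_or_lt with rfl | hlt
    · exact ⟨i + 1, le_rfl, rfl, by grind⟩
    · obtain ⟨k, hki, rfl, hlast⟩ := ih (by grind [hf.le_succ i])
      refine ⟨k, hki.trans i.le_succ, rfl, fun m hkm hmi => ?_⟩
      rcases hmi.eq_or_lt with rfl | hmi
      · exact hlt
      · exact hlast m hkm (Nat.lt_succ_iff.mp hmi)

end IsStuttering

theorem sat_app_congr {V : Type} {ξ ξ' : ℕ → V → Bool} {i i' n : ℕ}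
    {g : (Fin n → Bool) → Bool} {args : Fin n → TFormula V}
    (h : ∀ k, Sat ξ i (args k) ↔ Sat ξ' i' (args k)) :
    Sat ξ i (TFormula.app n g args) ↔ Sat ξ' i' (TFormula.app n g args) :=
  exists_congr fun _ => and_congr_left' (forall_congr' fun k => iff_congr Iff.rfl (h k))

theorem sat_comp_iff_of_isStuttering {V : Type} {f : ℕ → ℕ} (hf : IsStuttering f)
    (ξ : ℕ → V → Bool) {φ : TFormula V} (hφ : OnlyS φ) (i : ℕ) :
    Sat (fun k => ξ (f k)) i φ ↔ Sat ξ (f i) φ := by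
  induction φ generalizing i with
  | var x => rfl
  | app n g args ih => exact sat_app_congr fun k => ih k (hφ k) i
  | X | F | G | U => exact hφ.elim
  | S φ ψ ihφ ihψ =>
    obtain ⟨hφ, hψ⟩ := hφ
    simp only [Sat, ihφ hφ, ihψ hψ]
    constructor
    · rintro ⟨k, hki, hψk, hφk⟩
      refine ⟨f k, hf.monotone hki, hψk, fun n hkn hni => ?_⟩
      obtain ⟨m, hkm, hmi, rfl⟩ := hf.exists_preimage_between hki hkn hni
      exact hφk m hkm hmi
    · rintro ⟨n, hni, hψn, hφn⟩
      obtain ⟨k, hki, rfl, hlast⟩ := hf.exists_last_preimage hni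
      exact ⟨k, hki, hψn, fun m hkm hmi => hφn (f m) (hlast m hkm hmi) (hf.monotone hmi)⟩

theorem isStuttering_repeat (j : ℕ) : IsStuttering fun k => if k ≤ j then k else k - 1 where
  map_zero := by simp
  monotone := monotone_nat_of_le_succ fun k => by split_ifs <;> omega
  le_succ k := by split_ifs <;> omega

/-- Truth of formulas whose only temporal operator is S is invariant
under repeating the state `s j` once:  with `ξ′ k = ξ k` for `k ≤ j` and
`ξ′ k = ξ (k-1)` for `k > j`, truth at `s i` (for `i ≤ j`) resp. at `s (i+1)`
(for `i ≥ j`) in the new structure agrees with truth at `s i` in the old one. -/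
theorem stmt9 {V : Type} (φ : TFormula V) (hφ : OnlyS φ) (ξ : ℕ → V → Bool) (j : ℕ) :
    ∀ i : ℕ,
      (i ≤ j → (Sat ξ i φ ↔ Sat (fun k => if k ≤ j then ξ k else ξ (k - 1)) i φ)) ∧
      (j ≤ i → (Sat ξ i φ ↔ Sat (fun k => if k ≤ j then ξ k else ξ (k - 1)) (i + 1) φ)) := by
  have hξ : (fun k => if k ≤ j then ξ k else ξ (k - 1))
      = fun k => ξ (if k ≤ j then k else k - 1) := by
    funext k
    split_ifs <;> rfl
  intro i
  rw [hξ]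
  refine ⟨fun hij => ?_, fun hji => ?_⟩
  · rw [sat_comp_iff_of_isStuttering (isStuttering_repeat j) ξ hφ, if_pos hij]
  · rw [sat_comp_iff_of_isStuttering (isStuttering_repeat j) ξ hφ,
      if_neg (by omega), Nat.add_sub_cancel]
end

section
/- Let ψ be a propositional formula over variables, the connective ⊕ (exclusive or), and the constant 1 that is not equivalent to a constant, and let ψ₁, …, ψₖ be arbitrary temporal formulas over variables, ⊕, 1, and the temporal operator X. Then the formula X ψ₁ ⊕ … ⊕ X ψₖ ⊕ ψ is satisfiable. -/
/-- Temporal formulas built from propositional variables, the binary connective ⊕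
(exclusive or), the constant 1, and the temporal operator X. -/
inductive XorF (V : Type) : Type
  | var : V → XorF V
  | one : XorF V
  | xor : XorF V → XorF V → XorF V
  | X : XorF V → XorF V

/-- An LTL structure is identified with its assignment `ξ : ℕ → V → Bool`.
`XorF.eval ξ i φ` is the truth value of `φ` at state `sᵢ`. -/
def XorF.eval {V : Type} (ξ : ℕ → V → Bool) : ℕ → XorF V → Bool
  | i, XorF.var x => ξ i x
  | _, XorF.one => true
  | i, XorF.xor φ ψ => Bool.xor (XorF.eval ξ i φ) (XorF.eval ξ i ψ)
  | i, XorF.X φ => XorF.eval ξ (i + 1) φ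

/-- Propositional formulas: the temporal operator X does not occur. -/
def XorF.noX {V : Type} : XorF V → Prop
  | XorF.var _ => True
  | XorF.one => True
  | XorF.xor φ ψ => XorF.noX φ ∧ XorF.noX ψ
  | XorF.X _ => False

/-- The formula `X ψ₁ ⊕ (X ψ₂ ⊕ (… ⊕ (X ψₖ ⊕ ψ)…))`. -/
def xorXForm {V : Type} {k : ℕ} (ψs : Fin k → XorF V) (ψ : XorF V) : XorF V :=
  (List.ofFn ψs).foldr (fun a b => XorF.xor (XorF.X a) b) ψ

/-- The formula `ψ₁ ⊕ (ψ₂ ⊕ (… ⊕ (ψₖ ⊕ 0)…))`, where the constant 0 is `1 ⊕ 1`. -/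
def xorListForm {V : Type} {k : ℕ} (ψs : Fin k → XorF V) : XorF V :=
  (List.ofFn ψs).foldr XorF.xor (XorF.xor XorF.one XorF.one)


/-! At state 0 the `X`-part of the formula only sees states `≥ 1`, while the propositional `ψ`
only sees state 0. Fix all later states arbitrarily; this determines the value `b` of the
`X`-part, and since `ψ` is not constant, state 0 can be chosen so that `ψ` takes the value `!b`. -/

namespace XorF

variable {V : Type}

theorem eval_congr_of_forall_ge (φ : XorF V) {ξ ξ' : ℕ → V → Bool} {i : ℕ}
    (h : ∀ j, i ≤ j → ξ j = ξ' j) : φ.eval ξ i = φ.eval ξ' i := by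
  induction φ generalizing i with
  | var x => simp only [eval, h i le_rfl]
  | one => rfl
  | xor a b iha ihb => simp only [eval, iha h, ihb h]
  | X a ih => exact ih fun j hj => h j (Nat.le_of_succ_le hj)

theorem eval_congr_of_noX {φ : XorF V} (hφ : φ.noX) {ξ ξ' : ℕ → V → Bool} {i i' : ℕ}
    (h : ξ i = ξ' i') : φ.eval ξ i = φ.eval ξ' i' := by
  induction φ with
  | var x => simp only [eval, h]
  | one => rfl
  | xor a b iha ihb => simp only [eval, iha hφ.1, ihb hφ.2]
  | X a _ => exact hφ.elim

theorem eval_foldr_xor_X (ξ : ℕ → V → Bool) (i : ℕ) (ψ : XorF V) (l : List (XorF V)) :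
    (l.foldr (fun a b => xor (X a) b) ψ).eval ξ i
      = Bool.xor ((l.foldr XorF.xor (xor one one)).eval ξ (i + 1)) (ψ.eval ξ i) := by
  induction l with
  | nil => simp [eval]
  | cons a l ih => simp [eval, ih]

theorem eval_xorXForm (ξ : ℕ → V → Bool) (i : ℕ) {k : ℕ} (ψs : Fin k → XorF V) (ψ : XorF V) :
    (xorXForm ψs ψ).eval ξ i = Bool.xor ((xorListForm ψs).eval ξ (i + 1)) (ψ.eval ξ i) :=
  eval_foldr_xor_X ξ i ψ _

theorem exists_eval_eq_of_not_const {ψ : XorF V}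
    (hnc : ¬ ∃ c : Bool, ∀ (ξ : ℕ → V → Bool) (i : ℕ), ψ.eval ξ i = c) (b : Bool) :
    ∃ (ξ : ℕ → V → Bool) (i : ℕ), ψ.eval ξ i = b := by
  by_contra! h
  exact hnc ⟨!b, fun ξ i => Bool.eq_not_of_ne (h ξ i)⟩

end XorF

/-- If `ψ` is a propositional formula over variables, ⊕ and 1 that is
not equivalent to a constant, and `ψ₁, …, ψₖ` are arbitrary temporal formulas over
variables, ⊕, 1 and X, then `X ψ₁ ⊕ … ⊕ X ψₖ ⊕ ψ` is satisfiable. -/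
theorem stmt12 {V : Type} (k : ℕ) (ψs : Fin k → XorF V) (ψ : XorF V)
    (hψ : XorF.noX ψ)
    (hnc : ¬ ∃ c : Bool, ∀ (ξ : ℕ → V → Bool) (i : ℕ), XorF.eval ξ i ψ = c) :
    ∃ (ξ : ℕ → V → Bool) (i : ℕ), XorF.eval ξ i (xorXForm ψs ψ) = true := by
  let ξ₀ : ℕ → V → Bool := fun _ _ => false
  let b := (xorListForm ψs).eval ξ₀ 1
  obtain ⟨ξ₁, i₁, hψ₁⟩ := XorF.exists_eval_eq_of_not_const hnc (!b)
  let ξ := Function.update ξ₀ 0 (ξ₁ i₁)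
  have hfuture : (xorListForm ψs).eval ξ 1 = b :=
    XorF.eval_congr_of_forall_ge _ fun j hj => Function.update_of_ne (by omega) _ _
  have hpresent : ψ.eval ξ 0 = !b :=
    (XorF.eval_congr_of_noX hψ (Function.update_self 0 _ ξ₀)).trans hψ₁
  refine ⟨ξ, 0, ?_⟩
  rw [XorF.eval_xorXForm, hfuture, hpresent, Bool.xor_not_self]
end

section
/- Let ψ₁, …, ψₖ be temporal formulas over variables, the connective ⊕ (exclusive or), the constant 1, and the temporal operator X, let φ' = ψ₁ ⊕ … ⊕ ψₖ, and let ψ be a propositional formula over variables, ⊕, and 1 that is equivalent to the constant c ∈ {0,1}. Then: (i) X ψ₁ ⊕ … ⊕ X ψₖ ⊕ ψ is satisfiable if and only if either c = 0 and φ' is satisfiable, or c = 1 and φ' is not a tautology; (ii) X ψ₁ ⊕ … ⊕ X ψₖ ⊕ ψ is a tautology if and only if either c = 0 and φ' is a tautology, or c = 1 and φ' is not satisfiable. -/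
/-! At state `i`, `X ψ₁ ⊕ … ⊕ X ψₖ ⊕ ψ` evaluates to `φ'` at state `i + 1` xor `c`. Since
dropping the first state of a structure turns state `i + 1` into state `i`, the formula `φ'`
takes exactly the same truth values at successor states as at arbitrary states, so satisfiability
and validity of the whole formula are those of `φ'`, negated when `c = 1`. -/

theorem XorF.eval_shift {V : Type} (ξ : ℕ → V → Bool) (j : ℕ) (φ : XorF V) (i : ℕ) :
    XorF.eval (fun n => ξ (n + j)) i φ = XorF.eval ξ (i + j) φ := by
  induction φ generalizing i with
  | var x => rfl
  | one => rfl
  | xor a b iha ihb => simp only [XorF.eval, iha, ihb]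
  | X a ih => simp only [XorF.eval, ih, Nat.add_right_comm]

theorem XorF.exists_eval_succ_iff {V : Type} (φ : XorF V) (b : Bool) :
    (∃ (ξ : ℕ → V → Bool) (i : ℕ), XorF.eval ξ (i + 1) φ = b) ↔
      ∃ (ξ : ℕ → V → Bool) (i : ℕ), XorF.eval ξ i φ = b := by
  refine ⟨fun ⟨ξ, i, h⟩ => ⟨ξ, i + 1, h⟩, fun ⟨ξ, i, h⟩ => ⟨fun n => ξ (n - 1), i, ?_⟩⟩
  simpa [← XorF.eval_shift (fun n => ξ (n - 1)) 1] using h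

theorem XorF.forall_eval_succ_iff {V : Type} (φ : XorF V) (b : Bool) :
    (∀ (ξ : ℕ → V → Bool) (i : ℕ), XorF.eval ξ (i + 1) φ = b) ↔
      ∀ (ξ : ℕ → V → Bool) (i : ℕ), XorF.eval ξ i φ = b := by
  refine ⟨fun h ξ i => ?_, fun h ξ i => h ξ (i + 1)⟩
  simpa [← XorF.eval_shift (fun n => ξ (n - 1)) 1] using h (fun n => ξ (n - 1)) i

theorem XorF.eval_xorXForm_s13 {V : Type} {k : ℕ} (ξ : ℕ → V → Bool) (i : ℕ)
    (ψs : Fin k → XorF V) (ψ : XorF V) :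
    XorF.eval ξ i (xorXForm ψs ψ) = (XorF.eval ξ (i + 1) (xorListForm ψs) ^^ XorF.eval ξ i ψ) := by
  unfold xorXForm xorListForm
  induction List.ofFn ψs with
  | nil => simp [XorF.eval]
  | cons a t ih => simp only [List.foldr_cons, XorF.eval, ih, Bool.xor_assoc]

theorem stmt13_general {V : Type} (k : ℕ) (ψs : Fin k → XorF V) (ψ : XorF V) (c : Bool)
    (hc : ∀ (ξ : ℕ → V → Bool) (i : ℕ), XorF.eval ξ i ψ = c) :
    ((∃ (ξ : ℕ → V → Bool) (i : ℕ), XorF.eval ξ i (xorXForm ψs ψ) = true) ↔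
      ((c = false ∧ ∃ (ξ : ℕ → V → Bool) (i : ℕ), XorF.eval ξ i (xorListForm ψs) = true) ∨
       (c = true ∧ ¬ ∀ (ξ : ℕ → V → Bool) (i : ℕ), XorF.eval ξ i (xorListForm ψs) = true))) ∧
    ((∀ (ξ : ℕ → V → Bool) (i : ℕ), XorF.eval ξ i (xorXForm ψs ψ) = true) ↔
      ((c = false ∧ ∀ (ξ : ℕ → V → Bool) (i : ℕ), XorF.eval ξ i (xorListForm ψs) = true) ∨
       (c = true ∧ ¬ ∃ (ξ : ℕ → V → Bool) (i : ℕ), XorF.eval ξ i (xorListForm ψs) = true))) := by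
  have hX : ∀ ξ i, XorF.eval ξ i (xorXForm ψs ψ) = true ↔
      XorF.eval ξ (i + 1) (xorListForm ψs) = !c := by
    intro ξ i
    rw [XorF.eval_xorXForm_s13, hc]
    cases c <;> simp
  simp only [hX, XorF.exists_eval_succ_iff, XorF.forall_eval_succ_iff]
  cases c <;> simp

/-- Let `φ′ = ψ₁ ⊕ … ⊕ ψₖ` and let `ψ` be a propositional ⊕-formula
equivalent to the constant `c`. Then (i) `X ψ₁ ⊕ … ⊕ X ψₖ ⊕ ψ` is satisfiable iff
(`c = 0` and `φ′` is satisfiable) or (`c = 1` and `φ′` is not a tautology); and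
(ii) `X ψ₁ ⊕ … ⊕ X ψₖ ⊕ ψ` is a tautology iff (`c = 0` and `φ′` is a tautology) or
(`c = 1` and `φ′` is not satisfiable). -/
theorem stmt13 {V : Type} (k : ℕ) (ψs : Fin k → XorF V) (ψ : XorF V)
    (hψ : XorF.noX ψ) (c : Bool)
    (hc : ∀ (ξ : ℕ → V → Bool) (i : ℕ), XorF.eval ξ i ψ = c) :
    ((∃ (ξ : ℕ → V → Bool) (i : ℕ), XorF.eval ξ i (xorXForm ψs ψ) = true) ↔
      ((c = false ∧ ∃ (ξ : ℕ → V → Bool) (i : ℕ), XorF.eval ξ i (xorListForm ψs) = true) ∨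
       (c = true ∧ ¬ ∀ (ξ : ℕ → V → Bool) (i : ℕ), XorF.eval ξ i (xorListForm ψs) = true))) ∧
    ((∀ (ξ : ℕ → V → Bool) (i : ℕ), XorF.eval ξ i (xorXForm ψs ψ) = true) ↔
      ((c = false ∧ ∀ (ξ : ℕ → V → Bool) (i : ℕ), XorF.eval ξ i (xorListForm ψs) = true) ∨
       (c = true ∧ ¬ ∃ (ξ : ℕ → V → Bool) (i : ℕ), XorF.eval ξ i (xorListForm ψs) = true))) :=
  stmt13_general k ψs ψ c hc
end

section
/- Let B be a finite set of monotone Boolean functions. Then a temporal B-formula φ over the temporal operators {F,G,X,U,S} is satisfiable if and only if the structure in which every propositional variable is true at every state satisfies φ at its first state s₀. -/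
namespace Sat

variable {V : Type}

theorem const_iff (v : V → Bool) (φ : TFormula V) (i j : ℕ) :
    Sat (fun _ => v) i φ ↔ Sat (fun _ => v) j φ := by
  induction φ generalizing i j with
  | var x => rfl
  | app n f args ih => simp only [Sat, fun k => ih k i j]
  | X φ ih => exact ih (i + 1) (j + 1)
  | F φ ih => exact ⟨fun ⟨k, _, hk⟩ => ⟨j, le_rfl, (ih k j).1 hk⟩,
      fun ⟨k, _, hk⟩ => ⟨i, le_rfl, (ih k i).1 hk⟩⟩
  | G φ ih => exact ⟨fun h k _ => (ih i k).1 (h i le_rfl), fun h k _ => (ih j k).1 (h j le_rfl)⟩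
  | U φ ψ _ ihψ =>
    refine ⟨fun ⟨k, _, hk, _⟩ => ⟨j, le_rfl, (ihψ k j).1 hk, fun _ h₁ h₂ => by omega⟩,
      fun ⟨k, _, hk, _⟩ => ⟨i, le_rfl, (ihψ k i).1 hk, fun _ h₁ h₂ => by omega⟩⟩
  | S φ ψ _ ihψ =>
    refine ⟨fun ⟨k, _, hk, _⟩ => ⟨j, le_rfl, (ihψ k j).1 hk, fun _ h₁ h₂ => by omega⟩,
      fun ⟨k, _, hk, _⟩ => ⟨i, le_rfl, (ihψ k i).1 hk, fun _ h₁ h₂ => by omega⟩⟩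

open Classical in
theorem mono {B : Set BFun} (hB : ∀ f ∈ B, Monotone f.2) {ξ η : ℕ → V → Bool} (hξη : ξ ≤ η)
    {φ : TFormula V} (hφ : UsesFuns B φ) {i : ℕ} (h : Sat ξ i φ) : Sat η i φ := by
  induction φ generalizing i with
  | var x => exact Bool.eq_true_of_true_le (h ▸ hξη i x)
  | app n f args ih =>
    obtain ⟨b, hb, hf⟩ := h
    refine ⟨fun k => decide (Sat η i (args k)), fun k => decide_eq_true_iff, ?_⟩
    have hle : b ≤ fun k => decide (Sat η i (args k)) := fun k => by
      cases hbk : b k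
      · exact Bool.false_le _
      · exact (decide_eq_true (ih k (hφ.2 k) ((hb k).1 hbk))).ge
    exact Bool.eq_true_of_true_le (hf ▸ hB ⟨n, f⟩ hφ.1 hle)
  | X φ ih => exact ih hφ h
  | F φ ih =>
    obtain ⟨k, hik, hk⟩ := h
    exact ⟨k, hik, ih hφ hk⟩
  | G φ ih => exact fun k hik => ih hφ (h k hik)
  | U φ ψ ihφ ihψ =>
    obtain ⟨k, hik, hk, hj⟩ := h
    exact ⟨k, hik, ihψ hφ.2 hk, fun j h₁ h₂ => ihφ hφ.1 (hj j h₁ h₂)⟩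
  | S φ ψ ihφ ihψ =>
    obtain ⟨k, hki, hk, hj⟩ := h
    exact ⟨k, hki, ihψ hφ.2 hk, fun j h₁ h₂ => ihφ hφ.1 (hj j h₁ h₂)⟩

end Sat

theorem stmt14_general {V : Type} (B : Set BFun)
    (hmon : ∀ f ∈ B, ∀ a b : Fin f.1 → Bool, (∀ k, a k ≤ b k) → f.2 a ≤ f.2 b)
    (φ : TFormula V) (hφ : UsesFuns B φ) :
    (∃ (ξ : ℕ → V → Bool) (i : ℕ), Sat ξ i φ) ↔ Sat (fun _ _ => true) 0 φ := by
  refine ⟨fun ⟨ξ, i, h⟩ => ?_, fun h => ⟨_, 0, h⟩⟩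
  have hall : Sat (fun _ _ => true) i φ :=
    h.mono (fun f hf _ _ hab => hmon f hf _ _ hab) (fun _ _ => Bool.le_true _) hφ
  exact (Sat.const_iff _ φ i 0).1 hall

/-- For a finite set `B` of monotone Boolean functions, a temporal
`B`-formula over {F,G,X,U,S} is satisfiable iff the all-true structure satisfies it
at its first state. -/
theorem stmt14 {V : Type} (B : Set BFun) (hfin : B.Finite)
    (hmon : ∀ f ∈ B, ∀ a b : Fin f.1 → Bool, (∀ k, a k ≤ b k) → f.2 a ≤ f.2 b)
    (φ : TFormula V) (hφ : UsesFuns B φ) :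
    (∃ (ξ : ℕ → V → Bool) (i : ℕ), Sat ξ i φ) ↔ Sat (fun _ _ => true) 0 φ :=
  stmt14_general B hmon φ hφ
end
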